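/- Let ρ : Ω̃ → (0,∞) be a C² function defining a flat metric (log ρ is harmonic on Ω̃), and let f : Ω → Ω̃ be a smooth map harmonic with respect to ρ with f_z(z) ≠ 0 for every z ∈ Ω. Then log|μ_f|, where μ_f = f_z̄/f_z, is harmonic on the open set Ω \ {z : f_z̄(z) = 0}; that is, Δ log|μ_f| = 0 away from the zero set of μ_f. -/

import Mathlib

noncomputable section

open Complex Set Topology

/-- Wirtinger derivative `∂f/∂z` of a map `f : ℂ → ℂ`, viewed as a map of `ℝ² = ℂ`. -/
def wdz (f : ℂ → ℂ) (z : ℂ) : ℂ :=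
  (1 / 2 : ℂ) * (fderiv ℝ f z 1 - Complex.I * fderiv ℝ f z Complex.I)

/-- Wirtinger derivative `∂f/∂z̄` of a map `f : ℂ → ℂ`. -/
def wdzbar (f : ℂ → ℂ) (z : ℂ) : ℂ :=
  (1 / 2 : ℂ) * (fderiv ℝ f z 1 + Complex.I * fderiv ℝ f z Complex.I)

/-- The Wirtinger derivative `(log ρ)_w` of the logarithm of a positive function `ρ`. -/
def wlog (ρ : ℂ → ℝ) (w : ℂ) : ℂ :=
  wdz (fun u => (Real.log (ρ u) : ℂ)) w

/-- A real valued function is harmonic on a set if its Laplacian `u_xx + u_yy` vanishes there. -/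
def IsHarmonicOn (u : ℂ → ℝ) (s : Set ℂ) : Prop :=
  ∀ z ∈ s,
    fderiv ℝ (fun w => fderiv ℝ u w 1) z 1 +
      fderiv ℝ (fun w => fderiv ℝ u w Complex.I) z Complex.I = 0

/-- `f` is harmonic on `Ω` with respect to the conformal metric `ρ(w)|dw|`:
the tension equation `f_zz̄ + (log ρ)_w(f) f_z f_z̄ = 0` holds on `Ω`. -/
def IsRhoHarmonicOn (f : ℂ → ℂ) (ρ : ℂ → ℝ) (Ω : Set ℂ) : Prop :=
  ∀ z ∈ Ω, wdz (wdzbar f) z + wlog ρ (f z) * wdz f z * wdzbar f z = 0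

-- decomposition of an ℝ-linear map ℂ → ℂ
lemma clm_decomp (T : ℂ →L[ℝ] ℂ) (h : ℂ) :
    T h = (1/2 : ℂ) * (T 1 - Complex.I * T Complex.I) * h
        + (1/2 : ℂ) * (T 1 + Complex.I * T Complex.I) * (starRingEnd ℂ) h := by
  obtain ⟨x, y⟩ := h
  have hhe : Complex.mk x y = (x:ℂ) + (y:ℂ)*Complex.I := Complex.mk_eq_add_mul_I x y
  have hTh : T (Complex.mk x y) = (x : ℂ) * T 1 + (y : ℂ) * T Complex.I := by
    rw [show Complex.mk x y = x • (1:ℂ) + y • Complex.I by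
      simp [Complex.real_smul, ← hhe]]
    rw [map_add, map_smul, map_smul]
    simp [Complex.real_smul]
  have hc : (starRingEnd ℂ) (Complex.mk x y) = (x:ℂ) - (y:ℂ)*Complex.I := by
    apply Complex.ext <;> simp
  rw [hTh, hc, hhe]
  linear_combination ((y:ℂ) * T Complex.I) * Complex.I_sq

lemma fderiv_apply_eq (g : ℂ → ℂ) (z v : ℂ) :
    fderiv ℝ g z v = wdz g z * v + wdzbar g z * (starRingEnd ℂ) v := by
  simpa [wdz, wdzbar] using clm_decomp (fderiv ℝ g z) v

section rules
variable {g h : ℂ → ℂ} {u : ℂ → ℝ} {z v : ℂ}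

lemma wdz_congr (he : g =ᶠ[nhds z] h) : wdz g z = wdz h z := by
  unfold wdz; rw [he.fderiv_eq]

lemma wdzbar_congr (he : g =ᶠ[nhds z] h) : wdzbar g z = wdzbar h z := by
  unfold wdzbar; rw [he.fderiv_eq]

lemma wdz_add (hg : DifferentiableAt ℝ g z) (hh : DifferentiableAt ℝ h z) :
    wdz (fun w => g w + h w) z = wdz g z + wdz h z := by
  unfold wdz; rw [fderiv_fun_add hg hh]; simp; ring

lemma wdzbar_add (hg : DifferentiableAt ℝ g z) (hh : DifferentiableAt ℝ h z) :
    wdzbar (fun w => g w + h w) z = wdzbar g z + wdzbar h z := by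
  unfold wdzbar; rw [fderiv_fun_add hg hh]; simp; ring

lemma wdz_sub (hg : DifferentiableAt ℝ g z) (hh : DifferentiableAt ℝ h z) :
    wdz (fun w => g w - h w) z = wdz g z - wdz h z := by
  unfold wdz; rw [fderiv_fun_sub hg hh]; simp; ring

lemma wdzbar_sub (hg : DifferentiableAt ℝ g z) (hh : DifferentiableAt ℝ h z) :
    wdzbar (fun w => g w - h w) z = wdzbar g z - wdzbar h z := by
  unfold wdzbar; rw [fderiv_fun_sub hg hh]; simp; ring

lemma wdz_neg : wdz (fun w => -(g w)) z = - wdz g z := by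
  unfold wdz; rw [fderiv_fun_neg]; simp; ring

lemma wdzbar_neg : wdzbar (fun w => -(g w)) z = - wdzbar g z := by
  unfold wdzbar; rw [fderiv_fun_neg]; simp; ring

lemma wdz_const_mul (c : ℂ) (hg : DifferentiableAt ℝ g z) :
    wdz (fun w => c * g w) z = c * wdz g z := by
  unfold wdz; rw [fderiv_const_mul hg]; simp; ring

lemma wdzbar_const_mul (c : ℂ) (hg : DifferentiableAt ℝ g z) :
    wdzbar (fun w => c * g w) z = c * wdzbar g z := by
  unfold wdzbar; rw [fderiv_const_mul hg]; simp; ring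

lemma wdz_mul (hg : DifferentiableAt ℝ g z) (hh : DifferentiableAt ℝ h z) :
    wdz (fun w => g w * h w) z = wdz g z * h z + g z * wdz h z := by
  unfold wdz; rw [fderiv_fun_mul hg hh]; simp [smul_eq_mul]; ring

lemma wdzbar_mul (hg : DifferentiableAt ℝ g z) (hh : DifferentiableAt ℝ h z) :
    wdzbar (fun w => g w * h w) z = wdzbar g z * h z + g z * wdzbar h z := by
  unfold wdzbar; rw [fderiv_fun_mul hg hh]; simp [smul_eq_mul]; ring

end rules

section rules2
variable {g h : ℂ → ℂ} {u : ℂ → ℝ} {z v : ℂ}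

lemma wdz_eq (g : ℂ → ℂ) (z : ℂ) :
    wdz g z = (1 / 2 : ℂ) * (fderiv ℝ g z 1 - Complex.I * fderiv ℝ g z Complex.I) := rfl

lemma wdzbar_eq (g : ℂ → ℂ) (z : ℂ) :
    wdzbar g z = (1 / 2 : ℂ) * (fderiv ℝ g z 1 + Complex.I * fderiv ℝ g z Complex.I) := rfl

lemma fderiv_inv_comp (hg : DifferentiableAt ℝ g z) (h0 : g z ≠ 0) (v : ℂ) :
    fderiv ℝ (fun w => (g w)⁻¹) z v = -((g z)^2)⁻¹ * fderiv ℝ g z v := by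
  have hinv : HasDerivAt (fun y : ℂ => y⁻¹) (-((g z)^2)⁻¹) (g z) := hasDerivAt_inv h0
  have H := (hinv.hasFDerivAt.restrictScalars ℝ).comp z hg.hasFDerivAt
  have hfd : fderiv ℝ (fun w => (g w)⁻¹) z = _ := HasFDerivAt.fderiv H
  rw [hfd]
  simp [smul_eq_mul]
  ring

lemma wdz_inv (hg : DifferentiableAt ℝ g z) (h0 : g z ≠ 0) :
    wdz (fun w => (g w)⁻¹) z = -(wdz g z) / (g z)^2 := by
  rw [wdz_eq, wdz_eq, fderiv_inv_comp hg h0, fderiv_inv_comp hg h0]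
  field_simp
  ring

lemma wdzbar_inv (hg : DifferentiableAt ℝ g z) (h0 : g z ≠ 0) :
    wdzbar (fun w => (g w)⁻¹) z = -(wdzbar g z) / (g z)^2 := by
  rw [wdzbar_eq, wdzbar_eq, fderiv_inv_comp hg h0, fderiv_inv_comp hg h0]
  field_simp
  ring

lemma fderiv_conj_comp (hg : DifferentiableAt ℝ g z) (v : ℂ) :
    fderiv ℝ (fun w => (starRingEnd ℂ) (g w)) z v = (starRingEnd ℂ) (fderiv ℝ g z v) := by
  have H := ((Complex.conjCLE : ℂ ≃L[ℝ] ℂ).toContinuousLinearMap.hasFDerivAt).comp z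
    hg.hasFDerivAt
  have hfd : fderiv ℝ (fun w => (starRingEnd ℂ) (g w)) z = _ := HasFDerivAt.fderiv H
  rw [hfd]
  rfl

lemma wdz_conj (hg : DifferentiableAt ℝ g z) :
    wdz (fun w => (starRingEnd ℂ) (g w)) z = (starRingEnd ℂ) (wdzbar g z) := by
  rw [wdz_eq, wdzbar_eq, fderiv_conj_comp hg, fderiv_conj_comp hg]
  simp only [map_mul, map_add, map_sub, map_one, map_div₀, map_ofNat, Complex.conj_I]
  ring

lemma wdzbar_conj (hg : DifferentiableAt ℝ g z) :
    wdzbar (fun w => (starRingEnd ℂ) (g w)) z = (starRingEnd ℂ) (wdz g z) := by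
  rw [wdzbar_eq, wdz_eq, fderiv_conj_comp hg, fderiv_conj_comp hg]
  simp only [map_mul, map_add, map_sub, map_one, map_div₀, map_ofNat, Complex.conj_I]
  ring

lemma wdz_comp (f : ℂ → ℂ) (hg : DifferentiableAt ℝ g (f z)) (hf : DifferentiableAt ℝ f z) :
    wdz (fun w => g (f w)) z
      = wdz g (f z) * wdz f z + wdzbar g (f z) * (starRingEnd ℂ) (wdzbar f z) := by
  have H := hg.hasFDerivAt.comp z hf.hasFDerivAt
  have hfd : fderiv ℝ (fun w => g (f w)) z = _ := HasFDerivAt.fderiv H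
  have e : ∀ v : ℂ, fderiv ℝ (fun w => g (f w)) z v
      = wdz g (f z) * fderiv ℝ f z v + wdzbar g (f z) * (starRingEnd ℂ) (fderiv ℝ f z v) := by
    intro v
    rw [hfd, ContinuousLinearMap.comp_apply, fderiv_apply_eq g (f z)]
  rw [wdz_eq (fun w => g (f w)) z, e 1, e Complex.I, wdz_eq f z, wdzbar_eq f z]
  simp only [map_mul, map_add, map_sub, map_one, map_div₀, map_ofNat, Complex.conj_I]
  ring

lemma wdzbar_comp (f : ℂ → ℂ) (hg : DifferentiableAt ℝ g (f z)) (hf : DifferentiableAt ℝ f z) :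
    wdzbar (fun w => g (f w)) z
      = wdz g (f z) * wdzbar f z + wdzbar g (f z) * (starRingEnd ℂ) (wdz f z) := by
  have H := hg.hasFDerivAt.comp z hf.hasFDerivAt
  have hfd : fderiv ℝ (fun w => g (f w)) z = _ := HasFDerivAt.fderiv H
  have e : ∀ v : ℂ, fderiv ℝ (fun w => g (f w)) z v
      = wdz g (f z) * fderiv ℝ f z v + wdzbar g (f z) * (starRingEnd ℂ) (fderiv ℝ f z v) := by
    intro v
    rw [hfd, ContinuousLinearMap.comp_apply, fderiv_apply_eq g (f z)]
  rw [wdzbar_eq (fun w => g (f w)) z, e 1, e Complex.I, wdzbar_eq f z, wdz_eq f z]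
  simp only [map_mul, map_add, map_sub, map_one, map_div₀, map_ofNat, Complex.conj_I]
  ring

lemma fderiv_ofReal_comp (hu : DifferentiableAt ℝ u z) (v : ℂ) :
    fderiv ℝ (fun w => ((u w : ℝ) : ℂ)) z v = ((fderiv ℝ u z v : ℝ) : ℂ) := by
  have H := (Complex.ofRealCLM.hasFDerivAt).comp z hu.hasFDerivAt
  have hfd : fderiv ℝ (fun w => ((u w : ℝ) : ℂ)) z = _ := HasFDerivAt.fderiv H
  rw [hfd]
  rfl

end rules2

section symm
variable {g : ℂ → ℂ} {z : ℂ}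

lemma fderiv_fderiv_apply (hg : ContDiffAt ℝ 2 g z) (u v : ℂ) :
    fderiv ℝ (fun w => fderiv ℝ g w u) z v = fderiv ℝ (fderiv ℝ g) z v u := by
  have hd : DifferentiableAt ℝ (fderiv ℝ g) z :=
    (hg.fderiv_right (m := 1) (by norm_num)).differentiableAt (by norm_num)
  have H := ((ContinuousLinearMap.apply ℝ ℂ u).hasFDerivAt).comp z hd.hasFDerivAt
  have hfd : fderiv ℝ (fun w => fderiv ℝ g w u) z = _ := HasFDerivAt.fderiv H
  rw [hfd]
  rfl

lemma second_symm (hg : ContDiffAt ℝ 2 g z) (u v : ℂ) :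
    fderiv ℝ (fun w => fderiv ℝ g w u) z v = fderiv ℝ (fun w => fderiv ℝ g w v) z u := by
  rw [fderiv_fderiv_apply hg, fderiv_fderiv_apply hg]
  exact hg.isSymmSndFDerivAt (by simp) v u

lemma diff_fderiv_apply (hg : ContDiffAt ℝ 2 g z) (u : ℂ) :
    DifferentiableAt ℝ (fun w => fderiv ℝ g w u) z := by
  have hd : DifferentiableAt ℝ (fderiv ℝ g) z :=
    (hg.fderiv_right (m := 1) (by norm_num)).differentiableAt (by norm_num)
  exact hd.clm_apply (differentiableAt_const u)

lemma fderiv_wdzbar_apply (hg : ContDiffAt ℝ 2 g z) (v : ℂ) :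
    fderiv ℝ (wdzbar g) z v = (1/2 : ℂ) * (fderiv ℝ (fun w => fderiv ℝ g w 1) z v
      + Complex.I * fderiv ℝ (fun w => fderiv ℝ g w Complex.I) z v) := by
  have h1 := diff_fderiv_apply hg 1
  have hI := diff_fderiv_apply hg Complex.I
  have : wdzbar g = fun w =>
      (1/2 : ℂ) * (fderiv ℝ g w 1 + Complex.I * fderiv ℝ g w Complex.I) := rfl
  rw [this, fderiv_const_mul (h1.fun_add (hI.const_mul Complex.I)), fderiv_fun_add h1 (hI.const_mul Complex.I),
    fderiv_const_mul hI]
  simp [smul_eq_mul]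
  try ring

lemma fderiv_wdz_apply (hg : ContDiffAt ℝ 2 g z) (v : ℂ) :
    fderiv ℝ (wdz g) z v = (1/2 : ℂ) * (fderiv ℝ (fun w => fderiv ℝ g w 1) z v
      - Complex.I * fderiv ℝ (fun w => fderiv ℝ g w Complex.I) z v) := by
  have h1 := diff_fderiv_apply hg 1
  have hI := diff_fderiv_apply hg Complex.I
  have : wdz g = fun w =>
      (1/2 : ℂ) * (fderiv ℝ g w 1 - Complex.I * fderiv ℝ g w Complex.I) := rfl
  rw [this, fderiv_const_mul (h1.fun_sub (hI.const_mul Complex.I)), fderiv_fun_sub h1 (hI.const_mul Complex.I),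
    fderiv_const_mul hI]
  simp [smul_eq_mul]
  try ring

lemma lap_eq_wdz_wdzbar (hg : ContDiffAt ℝ 2 g z) :
    fderiv ℝ (fun w => fderiv ℝ g w 1) z 1
      + fderiv ℝ (fun w => fderiv ℝ g w Complex.I) z Complex.I
      = 4 * wdz (wdzbar g) z := by
  rw [wdz_eq, fderiv_wdzbar_apply hg 1, fderiv_wdzbar_apply hg Complex.I,
    second_symm hg Complex.I 1]
  ring_nf
  rw [Complex.I_sq]
  ring

lemma wdzbar_wdz_comm (hg : ContDiffAt ℝ 2 g z) :
    wdzbar (wdz g) z = wdz (wdzbar g) z := by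
  rw [wdz_eq (wdzbar g), wdzbar_eq (wdz g), fderiv_wdzbar_apply hg 1,
    fderiv_wdzbar_apply hg Complex.I, fderiv_wdz_apply hg 1, fderiv_wdz_apply hg Complex.I,
    second_symm hg Complex.I 1]
  ring

end symm

section bridge
variable {u : ℂ → ℝ} {F : ℂ → ℂ} {z : ℂ}

lemma diff_fderiv_apply_real (hu : ContDiffAt ℝ 2 u z) (v : ℂ) :
    DifferentiableAt ℝ (fun w => fderiv ℝ u w v) z := by
  have hd : DifferentiableAt ℝ (fderiv ℝ u) z :=
    (hu.fderiv_right (m := 1) (by norm_num)).differentiableAt (by norm_num)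
  exact hd.clm_apply (differentiableAt_const v)

/-- transfer of second derivatives along `ofReal` on an open set -/
lemma second_fderiv_ofReal {U : Set ℂ} (hU : IsOpen U) (hz : z ∈ U)
    (hu : ContDiffOn ℝ 2 u U) (v v' : ℂ) :
    fderiv ℝ (fun w => fderiv ℝ (fun x => ((u x : ℝ) : ℂ)) w v) z v'
      = ((fderiv ℝ (fun w => fderiv ℝ u w v) z v' : ℝ) : ℂ) := by
  have hloc : (fun w => fderiv ℝ (fun x => ((u x : ℝ) : ℂ)) w v)
      =ᶠ[nhds z] (fun w => ((fderiv ℝ u w v : ℝ) : ℂ)) := by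
    filter_upwards [hU.mem_nhds hz] with w hw
    exact fderiv_ofReal_comp ((hu.contDiffAt (hU.mem_nhds hw)).differentiableAt
      (by norm_num)) v
  rw [hloc.fderiv_eq]
  exact fderiv_ofReal_comp (diff_fderiv_apply_real (hu.contDiffAt (hU.mem_nhds hz)) v) v'

/-- Flatness: if `u` is harmonic (real Laplacian form) and C² near `z`, then
`wdzbar (wdz uc) z = 0` for the complexification `uc`. -/
lemma wdzbar_wdz_ofReal_eq_zero {U : Set ℂ} (hU : IsOpen U) (hz : z ∈ U)
    (hu : ContDiffOn ℝ 2 u U)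
    (hharm : fderiv ℝ (fun w => fderiv ℝ u w 1) z 1
      + fderiv ℝ (fun w => fderiv ℝ u w Complex.I) z Complex.I = 0) :
    wdzbar (wdz (fun x => ((u x : ℝ) : ℂ))) z = 0 := by
  set uc := fun x => ((u x : ℝ) : ℂ) with huc
  have hucd : ContDiffAt ℝ 2 uc z :=
    (Complex.ofRealCLM.contDiff.comp_contDiffOn hu).contDiffAt (hU.mem_nhds hz)
  rw [wdzbar_eq (wdz uc) z, fderiv_wdz_apply hucd 1, fderiv_wdz_apply hucd Complex.I,
    second_symm hucd Complex.I 1]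
  rw [second_fderiv_ofReal hU hz hu 1 1, second_fderiv_ofReal hU hz hu 1 Complex.I,
    second_fderiv_ofReal hU hz hu Complex.I Complex.I]
  have : ((fderiv ℝ (fun w => fderiv ℝ u w Complex.I) z Complex.I : ℝ) : ℂ)
      = -((fderiv ℝ (fun w => fderiv ℝ u w 1) z 1 : ℝ) : ℂ) := by
    rw [← Complex.ofReal_neg]
    congr 1
    linarith
  rw [this]
  ring_nf
  rw [Complex.I_sq]
  ring

end bridge

section lognormsq
variable {F : ℂ → ℂ} {z : ℂ}

lemma fderiv_normSq_comp (hF : DifferentiableAt ℝ F z) (v : ℂ) :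
    fderiv ℝ (fun w => Complex.normSq (F w)) z v
      = 2 * ((F z).re * (fderiv ℝ F z v).re + (F z).im * (fderiv ℝ F z v).im) := by
  have hre : HasFDerivAt (fun w => (F w).re) (Complex.reCLM.comp (fderiv ℝ F z)) z :=
    Complex.reCLM.hasFDerivAt.comp z hF.hasFDerivAt
  have him : HasFDerivAt (fun w => (F w).im) (Complex.imCLM.comp (fderiv ℝ F z)) z :=
    Complex.imCLM.hasFDerivAt.comp z hF.hasFDerivAt
  have H := (hre.fun_mul hre).fun_add (him.fun_mul him)
  have heq : (fun w => Complex.normSq (F w))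
      = fun w => (F w).re * (F w).re + (F w).im * (F w).im := by
    funext w; rw [Complex.normSq_apply]
  rw [← heq] at H
  rw [H.fderiv]
  simp [smul_eq_mul]
  ring

lemma diff_normSq_comp (hF : DifferentiableAt ℝ F z) :
    DifferentiableAt ℝ (fun w => Complex.normSq (F w)) z := by
  have hre : HasFDerivAt (fun w => (F w).re) (Complex.reCLM.comp (fderiv ℝ F z)) z :=
    Complex.reCLM.hasFDerivAt.comp z hF.hasFDerivAt
  have him : HasFDerivAt (fun w => (F w).im) (Complex.imCLM.comp (fderiv ℝ F z)) z :=
    Complex.imCLM.hasFDerivAt.comp z hF.hasFDerivAt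
  have H := (hre.fun_mul hre).fun_add (him.fun_mul him)
  have heq : (fun w => Complex.normSq (F w))
      = fun w => (F w).re * (F w).re + (F w).im * (F w).im := by
    funext w; rw [Complex.normSq_apply]
  rw [← heq] at H
  exact H.differentiableAt

lemma diff_log_normSq (hF : DifferentiableAt ℝ F z) (h0 : F z ≠ 0) :
    DifferentiableAt ℝ (fun w => Real.log (Complex.normSq (F w))) z := by
  have hne : Complex.normSq (F z) ≠ 0 := by
    simpa [Complex.normSq_eq_zero] using h0
  exact ((Real.hasDerivAt_log hne).comp_hasFDerivAt z
    (diff_normSq_comp hF).hasFDerivAt).differentiableAt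

lemma fderiv_log_normSq (hF : DifferentiableAt ℝ F z) (h0 : F z ≠ 0) (v : ℂ) :
    ((fderiv ℝ (fun w => Real.log (Complex.normSq (F w))) z v : ℝ) : ℂ)
      = ((starRingEnd ℂ) (F z) * fderiv ℝ F z v + F z * (starRingEnd ℂ) (fderiv ℝ F z v))
          / (F z * (starRingEnd ℂ) (F z)) := by
  have hne : Complex.normSq (F z) ≠ 0 := by
    simpa [Complex.normSq_eq_zero] using h0
  have H := (Real.hasDerivAt_log hne).comp_hasFDerivAt z (diff_normSq_comp hF).hasFDerivAt
  have hfd : fderiv ℝ (fun w => Real.log (Complex.normSq (F w))) z = _ :=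
    HasFDerivAt.fderiv H
  rw [hfd]
  have happ : (((Complex.normSq (F z))⁻¹ : ℝ) •
      fderiv ℝ (fun w => Complex.normSq (F w)) z) v
      = ((Complex.normSq (F z))⁻¹ : ℝ) * fderiv ℝ (fun w => Complex.normSq (F w)) z v := rfl
  rw [happ, fderiv_normSq_comp hF v]
  have hnum : (starRingEnd ℂ) (F z) * fderiv ℝ F z v + F z * (starRingEnd ℂ) (fderiv ℝ F z v)
      = ((2 * ((F z).re * (fderiv ℝ F z v).re + (F z).im * (fderiv ℝ F z v).im) : ℝ) : ℂ) := by
    apply Complex.ext <;> simp <;> ring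
  have hden : F z * (starRingEnd ℂ) (F z) = ((Complex.normSq (F z) : ℝ) : ℂ) :=
    Complex.mul_conj (F z)
  rw [hnum, hden]
  push_cast
  field_simp

end lognormsq

section keylog
variable {F : ℂ → ℂ} {z : ℂ}

lemma wdzbar_log_normSq (hF : DifferentiableAt ℝ F z) (h0 : F z ≠ 0) :
    wdzbar (fun w => ((Real.log (Complex.normSq (F w)) : ℝ) : ℂ)) z
      = wdzbar F z / F z + (starRingEnd ℂ) (wdz F z / F z) := by
  have hd := diff_log_normSq hF h0
  rw [wdzbar_eq, fderiv_ofReal_comp hd 1, fderiv_ofReal_comp hd Complex.I,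
    fderiv_log_normSq hF h0 1, fderiv_log_normSq hF h0 Complex.I,
    fderiv_apply_eq F z 1, fderiv_apply_eq F z Complex.I]
  have hca : (starRingEnd ℂ) (F z) ≠ 0 := by
    simpa using h0
  simp only [map_add, map_mul, map_one, Complex.conj_conj, Complex.conj_I, map_div₀]
  field_simp
  simp only [map_neg, Complex.conj_I, neg_neg]
  ring_nf
  rw [Complex.I_sq]
  ring

end keylog

section plumb
variable {g : ℂ → ℂ} {Ω : Set ℂ}

lemma contDiffOn_wdz_fin {k : ℕ} (hΩ : IsOpen Ω) (hg : ContDiffOn ℝ (k+1 : ℕ) g Ω) :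
    ContDiffOn ℝ k (wdz g) Ω := by
  have hfd : ContDiffOn ℝ k (fderiv ℝ g) Ω := by
    apply hg.fderiv_of_isOpen hΩ
    exact_mod_cast le_rfl
  have : ContDiffOn ℝ k
      (fun z => (1/2 : ℂ) * (fderiv ℝ g z 1 - Complex.I * fderiv ℝ g z Complex.I)) Ω :=
    contDiffOn_const.mul ((hfd.clm_apply contDiffOn_const).sub
      (contDiffOn_const.mul (hfd.clm_apply contDiffOn_const)))
  exact this

lemma contDiffOn_wdzbar_fin {k : ℕ} (hΩ : IsOpen Ω) (hg : ContDiffOn ℝ (k+1 : ℕ) g Ω) :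
    ContDiffOn ℝ k (wdzbar g) Ω := by
  have hfd : ContDiffOn ℝ k (fderiv ℝ g) Ω := by
    apply hg.fderiv_of_isOpen hΩ
    exact_mod_cast le_rfl
  have : ContDiffOn ℝ k
      (fun z => (1/2 : ℂ) * (fderiv ℝ g z 1 + Complex.I * fderiv ℝ g z Complex.I)) Ω :=
    contDiffOn_const.mul ((hfd.clm_apply contDiffOn_const).add
      (contDiffOn_const.mul (hfd.clm_apply contDiffOn_const)))
  exact this

lemma contDiffOn_log_normSq {F : ℂ → ℂ} {U : Set ℂ} {k : ℕ}
    (hF : ContDiffOn ℝ k F U) (h0 : ∀ w ∈ U, F w ≠ 0) :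
    ContDiffOn ℝ k (fun w => Real.log (Complex.normSq (F w))) U := by
  have hre : ContDiffOn ℝ k (fun w => (F w).re) U :=
    Complex.reCLM.contDiff.comp_contDiffOn hF
  have him : ContDiffOn ℝ k (fun w => (F w).im) U :=
    Complex.imCLM.contDiff.comp_contDiffOn hF
  have hns : ContDiffOn ℝ k (fun w => Complex.normSq (F w)) U := by
    have : ContDiffOn ℝ k (fun w => (F w).re * (F w).re + (F w).im * (F w).im) U :=
      (hre.mul hre).add (him.mul him)
    have heq : (fun w => Complex.normSq (F w))
        = fun w => (F w).re * (F w).re + (F w).im * (F w).im := by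
      funext w; rw [Complex.normSq_apply]
    rw [heq]
    exact this
  exact hns.log (fun w hw => by simpa [Complex.normSq_eq_zero] using h0 w hw)

end plumb

section divrules
variable {g h : ℂ → ℂ} {z : ℂ}

lemma wdz_div (hg : DifferentiableAt ℝ g z) (hh : DifferentiableAt ℝ h z) (h0 : h z ≠ 0) :
    wdz (fun w => g w / h w) z = wdz g z / h z - g z * wdz h z / h z ^ 2 := by
  have : (fun w => g w / h w) = fun w => g w * (h w)⁻¹ := by
    funext w; rw [div_eq_mul_inv]
  rw [this, wdz_mul hg (hh.fun_inv h0), wdz_inv hh h0]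
  field_simp
  ring

lemma wdzbar_div (hg : DifferentiableAt ℝ g z) (hh : DifferentiableAt ℝ h z) (h0 : h z ≠ 0) :
    wdzbar (fun w => g w / h w) z = wdzbar g z / h z - g z * wdzbar h z / h z ^ 2 := by
  have : (fun w => g w / h w) = fun w => g w * (h w)⁻¹ := by
    funext w; rw [div_eq_mul_inv]
  rw [this, wdzbar_mul hg (hh.fun_inv h0), wdzbar_inv hh h0]
  field_simp
  ring

lemma diff_conj_comp (hg : DifferentiableAt ℝ g z) :
    DifferentiableAt ℝ (fun w => (starRingEnd ℂ) (g w)) z :=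
  ((Complex.conjCLE : ℂ ≃L[ℝ] ℂ).toContinuousLinearMap.hasFDerivAt.comp z
    hg.hasFDerivAt).differentiableAt

end divrules

lemma diffat_div {g h : ℂ → ℂ} {z : ℂ} (hg : DifferentiableAt ℝ g z)
    (hh : DifferentiableAt ℝ h z) (h0 : h z ≠ 0) :
    DifferentiableAt ℝ (fun w => g w / h w) z := by
  have : (fun w => g w / h w) = fun w => g w * (h w)⁻¹ := by
    funext w; rw [div_eq_mul_inv]
  rw [this]
  exact hg.mul (hh.inv h0)

/-- for a harmonic map with respect to a flat metric, `log |μ_f|` is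
harmonic away from the zero set of `μ_f`. -/
theorem log_abs_beltrami_harmonic
    (Ω Ω' : Set ℂ) (hΩ : IsOpen Ω) (hΩ' : IsOpen Ω')
    (ρ : ℂ → ℝ) (hρpos : ∀ w ∈ Ω', 0 < ρ w) (hρ : ContDiffOn ℝ 2 ρ Ω')
    (hflat : IsHarmonicOn (fun w => Real.log (ρ w)) Ω')
    (f : ℂ → ℂ) (hf : ContDiffOn ℝ (⊤ : ℕ∞) f Ω) (hmaps : Set.MapsTo f Ω Ω')
    (hharm : IsRhoHarmonicOn f ρ Ω)
    (hfz : ∀ z ∈ Ω, wdz f z ≠ 0) :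
    IsHarmonicOn (fun z => Real.log ‖wdzbar f z / wdz f z‖)
      (Ω \ {z | wdzbar f z = 0}) := by
  intro z₀ hz₀
  obtain ⟨hzΩ, hz2'⟩ := hz₀
  set F1 : ℂ → ℂ := wdz f with hF1def
  set F2 : ℂ → ℂ := wdzbar f with hF2def
  have hz2 : F2 z₀ ≠ 0 := by simpa using hz2'
  set E : ℂ → ℂ := wdz F2 with hEdef
  -- smoothness of the basic functions
  have hfk : ∀ k : ℕ, ContDiffOn ℝ (k : ℕ) f Ω := fun k => hf.of_le (by exact_mod_cast le_top)
  have hF1k : ∀ k : ℕ, ContDiffOn ℝ (k : ℕ) F1 Ω := fun k => contDiffOn_wdz_fin hΩ (hfk (k+1))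
  have hF2k : ∀ k : ℕ, ContDiffOn ℝ (k : ℕ) F2 Ω := fun k => contDiffOn_wdzbar_fin hΩ (hfk (k+1))
  have hEk : ∀ k : ℕ, ContDiffOn ℝ (k : ℕ) E Ω := fun k => contDiffOn_wdz_fin hΩ (hF2k (k+1))
  have hdiff : ∀ (g : ℂ → ℂ), ContDiffOn ℝ (1 : ℕ) g Ω → ∀ z ∈ Ω, DifferentiableAt ℝ g z :=
    fun g hg z hz => (hg.contDiffAt (hΩ.mem_nhds hz)).differentiableAt
      (by norm_num)
  have hdf := hdiff f (hfk 1)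
  have hdF1 := hdiff F1 (hF1k 1)
  have hdF2 := hdiff F2 (hF2k 1)
  have hdE := hdiff E (hEk 1)
  have hdwdzF1 := hdiff (wdz F1) (contDiffOn_wdz_fin hΩ (hF1k 2))
  have hdwbF1 := hdiff (wdzbar F1) (contDiffOn_wdzbar_fin hΩ (hF1k 2))
  have hdwbF2 := hdiff (wdzbar F2) (contDiffOn_wdzbar_fin hΩ (hF2k 2))
  have hc2 : ∀ (g : ℂ → ℂ), ContDiffOn ℝ (2 : ℕ) g Ω → ∀ z ∈ Ω, ContDiffAt ℝ 2 g z :=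
    fun g hg z hz => by
      have := hg.contDiffAt (hΩ.mem_nhds hz); exact_mod_cast this
  have hcf := hc2 f (hfk 2)
  have hcF1 := hc2 F1 (hF1k 2)
  have hcF2 := hc2 F2 (hF2k 2)
  -- the metric side
  set σ : ℂ → ℝ := fun w => Real.log (ρ w) with hσdef
  set σc : ℂ → ℂ := fun w => ((Real.log (ρ w) : ℝ) : ℂ) with hσcdef
  set sp : ℂ → ℂ := wdz σc with hspdef
  set A : ℂ → ℂ := fun z => sp (f z) with hAdef
  have hσΩ' : ContDiffOn ℝ 2 σ Ω' := hρ.log (fun w hw => (hρpos w hw).ne')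
  have hσcΩ' : ContDiffOn ℝ 2 σc Ω' := Complex.ofRealCLM.contDiff.comp_contDiffOn hσΩ'
  set w₀ : ℂ := f z₀ with hw₀def
  have hw₀ : w₀ ∈ Ω' := hmaps hzΩ
  have hdsp : DifferentiableAt ℝ sp w₀ := by
    have h2 : ContDiffOn ℝ ((1:ℕ)+1 : ℕ) σc Ω' := by exact_mod_cast hσcΩ'
    exact ((contDiffOn_wdz_fin hΩ' h2).contDiffAt (hΩ'.mem_nhds hw₀)).differentiableAt
      (by norm_num)
  have hflat0 : wdzbar sp w₀ = 0 := by
    rw [hspdef]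
    exact wdzbar_wdz_ofReal_eq_zero hΩ' hw₀ hσΩ' (hflat w₀ hw₀)
  have hdA : DifferentiableAt ℝ A z₀ := by
    rw [hAdef]
    exact hdsp.comp z₀ (hdf z₀ hzΩ)
  -- the PDE
  have hwl : wlog ρ = sp := rfl
  have hPDE : ∀ z ∈ Ω, E z = -(A z * (F1 z * F2 z)) := by
    intro z hz
    have h := hharm z hz
    rw [← hF1def, ← hF2def, ← hEdef, hwl] at h
    rw [hAdef]
    linear_combination h
  have hsymmF1 : ∀ w ∈ Ω, wdzbar F1 w = E w := by
    intro w hw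
    have h := wdzbar_wdz_comm (hcf w hw)
    rw [← hF1def, ← hF2def, ← hEdef] at h
    exact h
  -- the open set U where both F1 and F2 are nonvanishing
  set U : Set ℂ := Ω ∩ F2 ⁻¹' ({(0:ℂ)}ᶜ) with hUdef
  have hUsub : U ⊆ Ω := Set.inter_subset_left
  have hUopen : IsOpen U :=
    (hF2k 1).continuousOn.isOpen_inter_preimage hΩ isOpen_compl_singleton
  have hz₀U : z₀ ∈ U := ⟨hzΩ, by simpa using hz2⟩
  have hU2 : ∀ w ∈ U, F2 w ≠ 0 := fun w hw => by simpa using hw.2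
  have hU1 : ∀ w ∈ U, F1 w ≠ 0 := fun w hw => hfz w (hUsub hw)
  -- replace u by ũ
  set ut : ℂ → ℝ := fun z =>
    (Real.log (Complex.normSq (F2 z)) - Real.log (Complex.normSq (F1 z)))/2 with hutdef
  have hueq : ∀ w ∈ U, Real.log ‖F2 w / F1 w‖ = ut w := by
    intro w hw
    have h1 := hU1 w hw
    have h2 := hU2 w hw
    rw [hutdef]
    simp only [norm_div]
    rw [Real.log_div (by simpa using h2) (by simpa using h1),
      Complex.norm_def, Complex.norm_def,
      Real.log_sqrt (Complex.normSq_nonneg _), Real.log_sqrt (Complex.normSq_nonneg _)]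
    ring
  have hueq' : ∀ w ∈ U,
      fderiv ℝ (fun z => Real.log ‖F2 z / F1 z‖) w = fderiv ℝ ut w :=
    fun w hw => Filter.EventuallyEq.fderiv_eq
      (Filter.eventuallyEq_of_mem (hUopen.mem_nhds hw) hueq)
  have hg1 : fderiv ℝ (fun w => fderiv ℝ (fun z => Real.log ‖F2 z / F1 z‖) w 1) z₀
      = fderiv ℝ (fun w => fderiv ℝ ut w 1) z₀ :=
    Filter.EventuallyEq.fderiv_eq (by
      filter_upwards [hUopen.mem_nhds hz₀U] with w hw
      rw [hueq' w hw])
  have hgI : fderiv ℝ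
        (fun w => fderiv ℝ (fun z => Real.log ‖F2 z / F1 z‖) w Complex.I) z₀
      = fderiv ℝ (fun w => fderiv ℝ ut w Complex.I) z₀ :=
    Filter.EventuallyEq.fderiv_eq (by
      filter_upwards [hUopen.mem_nhds hz₀U] with w hw
      rw [hueq' w hw])
  rw [hg1, hgI]
  -- smoothness of ũ on U
  have hut2 : ContDiffOn ℝ 2 ut U := by
    have h2' : ContDiffOn ℝ (2:ℕ) ut U := by
      apply ContDiffOn.div_const
      exact (contDiffOn_log_normSq ((hF2k 2).mono hUsub) hU2).sub
        (contDiffOn_log_normSq ((hF1k 2).mono hUsub) hU1)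
    exact_mod_cast h2'
  set utc : ℂ → ℂ := fun w => ((ut w : ℝ) : ℂ) with hutcdef
  have hutc2 : ContDiffAt ℝ 2 utc z₀ :=
    (Complex.ofRealCLM.contDiff.comp_contDiffOn hut2).contDiffAt (hUopen.mem_nhds hz₀U)
  -- MAIN: the complex Laplacian of utc vanishes at z₀
  have MAIN : wdz (wdzbar utc) z₀ = 0 := by
    have ha0 : F1 z₀ ≠ 0 := hU1 z₀ hz₀U
    have hb0 : F2 z₀ ≠ 0 := hU2 z₀ hz₀U
    have hca0 : (starRingEnd ℂ) (F1 z₀) ≠ 0 := by simpa using ha0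
    have hcb0 : (starRingEnd ℂ) (F2 z₀) ≠ 0 := by simpa using hb0
    set B1 : ℂ → ℂ := fun w => wdzbar F1 w / F1 w
      + (starRingEnd ℂ) (wdz F1 w / F1 w) with hB1def
    set B2 : ℂ → ℂ := fun w => wdzbar F2 w / F2 w
      + (starRingEnd ℂ) (wdz F2 w / F2 w) with hB2def
    have hwbar_loc : ∀ w ∈ U, wdzbar utc w = (1/2 : ℂ) * (B2 w - B1 w) := by
      intro w hw
      have hwΩ := hUsub hw
      have hd2 : DifferentiableAt ℝ
          (fun x => ((Real.log (Complex.normSq (F2 x)) : ℝ) : ℂ)) w :=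
        (Complex.ofRealCLM.hasFDerivAt.comp w
          (diff_log_normSq (hdF2 w hwΩ) (hU2 w hw)).hasFDerivAt).differentiableAt
      have hd1 : DifferentiableAt ℝ
          (fun x => ((Real.log (Complex.normSq (F1 x)) : ℝ) : ℂ)) w :=
        (Complex.ofRealCLM.hasFDerivAt.comp w
          (diff_log_normSq (hdF1 w hwΩ) (hU1 w hw)).hasFDerivAt).differentiableAt
      have hfun : utc = fun x => (1/2 : ℂ) *
          (((Real.log (Complex.normSq (F2 x)) : ℝ) : ℂ)
            - ((Real.log (Complex.normSq (F1 x)) : ℝ) : ℂ)) := by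
        funext x
        rw [hutcdef, hutdef]
        push_cast
        ring
      rw [hfun, wdzbar_const_mul _ (hd2.fun_sub hd1), wdzbar_sub hd2 hd1,
        wdzbar_log_normSq (hdF2 w hwΩ) (hU2 w hw),
        wdzbar_log_normSq (hdF1 w hwΩ) (hU1 w hw), hB1def, hB2def]
    have hB1d : DifferentiableAt ℝ B1 z₀ := by
      rw [hB1def]
      exact (diffat_div (hdwbF1 z₀ hzΩ) (hdF1 z₀ hzΩ) ha0).add
        (diff_conj_comp (diffat_div (hdwdzF1 z₀ hzΩ) (hdF1 z₀ hzΩ) ha0))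
    have hB2d : DifferentiableAt ℝ B2 z₀ := by
      rw [hB2def]
      exact (diffat_div (hdwbF2 z₀ hzΩ) (hdF2 z₀ hzΩ) hb0).add
        (diff_conj_comp (diffat_div (hdE z₀ hzΩ) (hdF2 z₀ hzΩ) hb0))
    have hevB : wdzbar utc =ᶠ[nhds z₀] fun w => (1/2 : ℂ) * (B2 w - B1 w) :=
      Filter.eventuallyEq_of_mem (hUopen.mem_nhds hz₀U) hwbar_loc
    -- derivatives of E via the PDE
    have hEev : E =ᶠ[nhds z₀] (fun z => -(A z * (F1 z * F2 z))) :=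
      Filter.eventuallyEq_of_mem (hΩ.mem_nhds hzΩ) hPDE
    have hP : wdz E z₀ = -(wdz A z₀ * (F1 z₀ * F2 z₀)
        + A z₀ * (wdz F1 z₀ * F2 z₀ + F1 z₀ * E z₀)) := by
      rw [wdz_congr hEev, wdz_neg, wdz_mul hdA ((hdF1 z₀ hzΩ).fun_mul (hdF2 z₀ hzΩ)),
        wdz_mul (hdF1 z₀ hzΩ) (hdF2 z₀ hzΩ), ← hEdef]
    have hQ : wdzbar E z₀ = -(wdzbar A z₀ * (F1 z₀ * F2 z₀)
        + A z₀ * (E z₀ * F2 z₀ + F1 z₀ * wdzbar F2 z₀)) := by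
      rw [wdzbar_congr hEev, wdzbar_neg, wdzbar_mul hdA ((hdF1 z₀ hzΩ).fun_mul (hdF2 z₀ hzΩ)),
        wdzbar_mul (hdF1 z₀ hzΩ) (hdF2 z₀ hzΩ), hsymmF1 z₀ hzΩ]
    -- chain rule for A and flatness
    have hwA : wdz A z₀ = wdz sp w₀ * F1 z₀ := by
      rw [hAdef]
      rw [wdz_comp f hdsp (hdf z₀ hzΩ)]
      rw [← hF1def, ← hF2def, ← hw₀def, hflat0]
      ring
    have hwbA : wdzbar A z₀ = wdz sp w₀ * F2 z₀ := by
      rw [hAdef]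
      rw [wdzbar_comp f hdsp (hdf z₀ hzΩ)]
      rw [← hF1def, ← hF2def, ← hw₀def, hflat0]
      ring
    -- symmetry facts
    have hsymev : wdzbar F1 =ᶠ[nhds z₀] E :=
      Filter.eventuallyEq_of_mem (hΩ.mem_nhds hzΩ) hsymmF1
    have hwwb1 : wdz (wdzbar F1) z₀ = wdz E z₀ := wdz_congr hsymev
    have hbw1 : wdzbar (wdz F1) z₀ = wdz E z₀ := by
      rw [wdzbar_wdz_comm (hcF1 z₀ hzΩ)]; exact hwwb1
    have hwwb2 : wdz (wdzbar F2) z₀ = wdzbar E z₀ := by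
      rw [← wdzbar_wdz_comm (hcF2 z₀ hzΩ), ← hEdef]
    have hbw2 : wdzbar (wdz F2) z₀ = wdzbar E z₀ := by rw [← hEdef]
    have he : E z₀ = -(A z₀ * (F1 z₀ * F2 z₀)) := hPDE z₀ hzΩ
    -- assemble
    rw [wdz_congr hevB, wdz_const_mul _ (hB2d.fun_sub hB1d), wdz_sub hB2d hB1d, hB1def, hB2def]
    rw [wdz_add (diffat_div (hdwbF2 z₀ hzΩ) (hdF2 z₀ hzΩ) hb0)
      (diff_conj_comp (diffat_div (hdE z₀ hzΩ) (hdF2 z₀ hzΩ) hb0))]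
    rw [wdz_add (diffat_div (hdwbF1 z₀ hzΩ) (hdF1 z₀ hzΩ) ha0)
      (diff_conj_comp (diffat_div (hdwdzF1 z₀ hzΩ) (hdF1 z₀ hzΩ) ha0))]
    rw [wdz_div (hdwbF2 z₀ hzΩ) (hdF2 z₀ hzΩ) hb0,
      wdz_div (hdwbF1 z₀ hzΩ) (hdF1 z₀ hzΩ) ha0]
    rw [wdz_conj (diffat_div (hdE z₀ hzΩ) (hdF2 z₀ hzΩ) hb0),
      wdz_conj (diffat_div (hdwdzF1 z₀ hzΩ) (hdF1 z₀ hzΩ) ha0)]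
    rw [wdzbar_div (hdE z₀ hzΩ) (hdF2 z₀ hzΩ) hb0,
      wdzbar_div (hdwdzF1 z₀ hzΩ) (hdF1 z₀ hzΩ) ha0]
    rw [hwwb1, hwwb2, hbw1, hbw2, hsymmF1 z₀ hzΩ, ← hEdef]
    rw [hP, hQ, hwA, hwbA, he]
    simp only [map_add, map_sub, map_mul, map_neg, map_div₀, map_pow]
    field_simp
    ring_nf
  have hlap := lap_eq_wdz_wdzbar hutc2
  rw [MAIN, mul_zero] at hlap
  have hb1 := second_fderiv_ofReal hUopen hz₀U hut2 1 1
  have hbI := second_fderiv_ofReal hUopen hz₀U hut2 Complex.I Complex.I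
  rw [← hutcdef] at hb1 hbI
  have : ((fderiv ℝ (fun w => fderiv ℝ ut w 1) z₀ 1
      + fderiv ℝ (fun w => fderiv ℝ ut w Complex.I) z₀ Complex.I : ℝ) : ℂ) = 0 := by
    push_cast
    rw [← hb1, ← hbI]
    exact hlap
  exact_mod_cast this
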